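/- There is no sequence (α_n)_{n≥1} of natural numbers satisfying: (i) 0 ≤ α_n ≤ n for all n; (ii) there exists n₀ with α_{n₀} ≥ 1; and (iii) α_{n + ⌊n/2⌋} ≥ 2·α_n for all n ≥ n₀. -/
import Mathlib

theorem no_doubling_aux : ∀ k : ℕ, 3^(k+1) + (k+1)*3^k ≤ 4^(k+1) := by
  intro k
  induction k with
  | zero => norm_num
  | succ k ih =>
    have h3 : (0:ℕ) < 3^k := pow_pos (by norm_num) k
    have e1 : (3:ℕ)^(k+2) = 3 * 3^(k+1) := by ring
    have e2 : (3:ℕ)^(k+1) = 3 * 3^k := by ring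
    have e3 : (4:ℕ)^(k+2) = 4 * 4^(k+1) := by ring
    nlinarith [ih, h3]

theorem no_doubling_sequence :
    ¬ ∃ α : ℕ → ℕ, (∀ n, 1 ≤ n → α n ≤ n) ∧
      ∃ n₀, 1 ≤ n₀ ∧ 1 ≤ α n₀ ∧ ∀ n, n₀ ≤ n → 2 * α n ≤ α (n + n / 2) := by
  rintro ⟨α, hle, n₀, hn₀, hα₀, hstep⟩
  set f : ℕ → ℕ := fun k => (fun m => m + m / 2)^[k] n₀ with hf
  have hf0 : f 0 = n₀ := rfl
  have hfs : ∀ k, f (k+1) = f k + f k / 2 := by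
    intro k
    simp [hf, Function.iterate_succ_apply']
  have hge : ∀ k, n₀ ≤ f k := by
    intro k
    induction k with
    | zero => simp [hf0]
    | succ k ih => rw [hfs]; omega
  have hαf : ∀ k, 2^k ≤ α (f k) := by
    intro k
    induction k with
    | zero => simpa [hf0] using hα₀
    | succ k ih =>
      rw [hfs, pow_succ]
      calc 2^k * 2 = 2 * 2^k := by ring
        _ ≤ 2 * α (f k) := Nat.mul_le_mul_left 2 ih
        _ ≤ α (f k + f k / 2) := hstep _ (hge k)
  have hbound : ∀ k, 2^k * f k ≤ 3^k * n₀ := by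
    intro k
    induction k with
    | zero => simp [hf0]
    | succ k ih =>
      rw [hfs, pow_succ, pow_succ]
      have h2 : 2 * (f k / 2) ≤ f k := by omega
      calc 2^k * 2 * (f k + f k / 2) = 2^k * (2 * f k + 2 * (f k / 2)) := by ring
        _ ≤ 2^k * (3 * f k) := Nat.mul_le_mul_left _ (by omega)
        _ = 3 * (2^k * f k) := by ring
        _ ≤ 3 * (3^k * n₀) := Nat.mul_le_mul_left 3 ih
        _ = 3^k * 3 * n₀ := by ring
  have h4 : ∀ k, 4^k ≤ 3^k * n₀ := by
    intro k
    calc (4:ℕ)^k = 2^k * 2^k := by rw [← mul_pow]; norm_num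
      _ ≤ 2^k * α (f k) := Nat.mul_le_mul_left _ (hαf k)
      _ ≤ 2^k * f k := Nat.mul_le_mul_left _ (hle (f k) (le_trans hn₀ (hge k)))
      _ ≤ 3^k * n₀ := hbound k
  have h1 := h4 (3*n₀ + 1)
  have h2 := no_doubling_aux (3*n₀)
  have h3 : (0:ℕ) < 3^(3*n₀) := pow_pos (by norm_num) _
  have e1 : (3:ℕ)^(3*n₀+1) = 3 * 3^(3*n₀) := by ring
  nlinarith [h1, h2, h3]
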